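/- Let A be a real m×n matrix, x, p ∈ ℝⁿ with ⟪x - p, p⟫ = 0, and b = A·x. Let W be the subspace of ℝⁿ spanned by p together with the rows of A, and let q be the orthogonal projection of x onto W. Then ‖q‖ = ‖p‖ if and only if A·p = b. -/

import Mathlib

open scoped RealInnerProductSpace
open Matrix

/-! Both `x - p` and `x - q` are orthogonal to `p`, hence so is `q - p`, and Pythagoras gives
`‖q‖² = ‖q - p‖² + ‖p‖²`: the norms agree exactly when `q = p`. Since `p ∈ W`, uniqueness of the
orthogonal projection turns `q = p` into `x - p ⊥ W`. As `x - p ⊥ p` holds already, this says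
`x - p` is orthogonal to every row of `A`, i.e. `A (x - p) = 0`. -/

theorem norm_eq_norm_iff_eq_of_inner_sub_self_eq_zero {F : Type*} [NormedAddCommGroup F]
    [InnerProductSpace ℝ F] {p q : F} (h : ⟪q - p, p⟫ = 0) : ‖q‖ = ‖p‖ ↔ q = p := by
  have hpyth : ‖q‖ ^ 2 = ‖q - p‖ ^ 2 + ‖p‖ ^ 2 := by
    simpa [sq] using norm_add_sq_eq_norm_sq_add_norm_sq_real h
  refine ⟨fun hqp => ?_, by rintro rfl; rfl⟩
  rw [hqp, right_eq_add, sq_eq_zero_iff, norm_sub_eq_zero_iff] at hpyth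
  exact hpyth

theorem Submodule.eq_iff_sub_mem_orthogonal_of_sub_mem_orthogonal {𝕜 E : Type*} [RCLike 𝕜]
    [NormedAddCommGroup E] [InnerProductSpace 𝕜 E] {K : Submodule 𝕜 E} {x p q : E}
    (hq : q ∈ K) (hp : p ∈ K) (hxq : x - q ∈ Kᗮ) : q = p ↔ x - p ∈ Kᗮ := by
  refine ⟨by rintro rfl; exact hxq, fun hxp => ?_⟩
  have hmem : q - p ∈ K ⊓ Kᗮ :=
    ⟨K.sub_mem hq hp, by simpa using Kᗮ.sub_mem hxp hxq⟩
  rw [K.inf_orthogonal_eq_bot, Submodule.mem_bot, sub_eq_zero] at hmem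
  exact hmem

theorem Matrix.mem_orthogonal_span_rows_iff {ι κ : Type*} [Fintype κ] (A : Matrix ι κ ℝ)
    (v : EuclideanSpace ℝ κ) :
    v ∈ (Submodule.span ℝ (Set.range fun i => WithLp.toLp 2 (A i)))ᗮ ↔ A *ᵥ v = 0 := by
  rw [← Submodule.span_singleton_le_iff_mem, ← Submodule.isOrtho_iff_le, Submodule.isOrtho_span]
  simp [funext_iff, PiLp.inner_apply, mulVec, dotProduct, mul_comm]

theorem ap_norm_stagnates_iff {m n : ℕ}
    (A : Matrix (Fin m) (Fin n) ℝ)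
    (x p : EuclideanSpace ℝ (Fin n)) (horth : ⟪x - p, p⟫ = 0)
    (b : EuclideanSpace ℝ (Fin m)) (hb : b = A.mulVec x)
    (W : Submodule ℝ (EuclideanSpace ℝ (Fin n)))
    (hW : W = Submodule.span ℝ {p} ⊔
        Submodule.span ℝ (Set.range fun i : Fin m => (WithLp.toLp 2 (A i) : EuclideanSpace ℝ (Fin n))))
    (q : EuclideanSpace ℝ (Fin n))
    (hqmem : q ∈ W) (hqorth : ∀ w ∈ W, ⟪x - q, w⟫ = 0) :
    ‖q‖ = ‖p‖ ↔ (WithLp.toLp 2 (A.mulVec p) : EuclideanSpace ℝ (Fin m)) = b := by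
  have hpW : p ∈ W := hW ▸ Submodule.mem_sup_left (Submodule.mem_span_singleton_self p)
  have hxq : x - q ∈ Wᗮ := (W.mem_orthogonal' _).2 hqorth
  have hqp : ⟪q - p, p⟫ = 0 := by
    rw [← sub_sub_sub_cancel_left p q x, inner_sub_left, horth,
      Submodule.inner_left_of_mem_orthogonal hpW hxq, sub_zero]
  rw [norm_eq_norm_iff_eq_of_inner_sub_self_eq_zero hqp,
    Submodule.eq_iff_sub_mem_orthogonal_of_sub_mem_orthogonal hqmem hpW hxq, hW,
    ← Submodule.inf_orthogonal, Submodule.mem_inf,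
    Submodule.mem_orthogonal_singleton_iff_inner_left, mem_orthogonal_span_rows_iff,
    WithLp.ofLp_sub, mulVec_sub, sub_eq_zero, ← (WithLp.ofLp_injective 2).eq_iff, hb,
    and_iff_right horth, eq_comm]
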